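/- Let u_1, …, u_n be positive integers, T = u_1 + … + u_n, and let t and k be integers with 0 < t < T and k ≥ 0. Let E' be the PB instance with projects C = {x_1,…,x_n, p}, costs cost(x_i) = u_i and cost(p) = 2T − t, budget B = 2T − 1, and a single voter who approves only p; run GreedyAV with cheaper-first tie-breaking. Then the number of sets F of exactly k approval flips such that p ∈ GreedyAV(E'_F) equals the number of subsets S ⊆ {1,…,n} with |S| = k and Σ_{i∈S} u_i ≤ t − 1. Consequently, the analogous count for the same instance with budget 2T, minus the count for budget 2T − 1, equals the number of subsets S ⊆ {1,…,n} with |S| = k and Σ_{i∈S} u_i = t. -/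

import Mathlib

structure PB (C V : Type) [Fintype C] [DecidableEq C] [Fintype V] [DecidableEq V] where
  A : V → Finset C
  budget : ℕ
  cost : C → ℕ

namespace PB

variable {C V : Type} [Fintype C] [DecidableEq C] [Fintype V] [DecidableEq V]

/-- The approval score of a project: the number of voters approving it. -/
def score (E : PB C V) (c : C) : ℕ :=
  (Finset.univ.filter fun v => c ∈ E.A v).card

/-- Perform the approval flips in `F`: voter `v`'s approval set becomes
`A v ∆ {c : (v, c) ∈ F}`. -/
def flip (E : PB C V) (F : Finset (V × C)) : PB C V :=
  { E with A := fun v => symmDiff (E.A v) ((F.filter fun q => q.1 = v).image Prod.snd) }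

/-- Greedily process the given list of projects: starting from `W = ∅`,
add the currently considered project whenever it fits in the budget. -/
def greedyFold (budget : ℕ) (cost : C → ℕ) (order : List C) : Finset C :=
  order.foldl (fun W c => if (∑ x ∈ W, cost x) + cost c ≤ budget then insert c W else W) ∅

/-- The order in which GreedyAV considers the projects: non-increasing approval
score, ties broken in favor of `prec`-earlier projects. -/
noncomputable def consOrderAV (E : PB C V) (prec : C → C → Bool) : List C :=
  (Finset.univ : Finset C).toList.mergeSort fun c c' =>
    decide (E.score c' < E.score c) ||
      (decide (E.score c = E.score c') && (prec c c' || decide (c = c')))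

/-- GreedyAV with tie-breaking given by the strict relation `prec`. -/
noncomputable def greedyAV (E : PB C V) (prec : C → C → Bool) : Finset C :=
  greedyFold E.budget E.cost (consOrderAV E prec)

/-- The order in which GreedyCost considers the projects: non-increasing
approval-score-to-cost ratio (compared by cross-multiplication), ties broken in
favor of `prec`-earlier projects. -/
noncomputable def consOrderCost (E : PB C V) (prec : C → C → Bool) : List C :=
  (Finset.univ : Finset C).toList.mergeSort fun c c' =>
    decide (E.score c' * E.cost c < E.score c * E.cost c') ||
      (decide (E.score c * E.cost c' = E.score c' * E.cost c) && (prec c c' || decide (c = c')))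

/-- GreedyCost with tie-breaking given by the strict relation `prec`. -/
noncomputable def greedyCost (E : PB C V) (prec : C → C → Bool) : Finset C :=
  greedyFold E.budget E.cost (consOrderCost E prec)

/-- Cheaper-first tie-breaking: ties in approval score are broken in favor of
the cheaper project, with remaining ties broken by the residual order `prec0`. -/
def cheaperFirst (cost : C → ℕ) (prec0 : C → C → Bool) : C → C → Bool :=
  fun c c' => decide (cost c < cost c') || (decide (cost c = cost c') && prec0 c c')

end PB

/-! Statement 6: counting briberies in the `#P`-hardness reduction for
GreedyAV with cheaper-first tie-breaking, with budget `2T − 1`, and the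
resulting count of subsets summing to exactly `t`. -/

/-- Costs: `cost(x_i) = u_i` and `cost(p) = 2T − t`, where `T = u_1 + … + u_n`. -/
def cost6 {n : ℕ} (u : Fin n → ℕ) (t : ℕ) : (Fin n ⊕ Unit) → ℕ
  | .inl i => u i
  | .inr _ => 2 * (∑ j, u j) - t

/-- The PB instance with a single voter approving only `p` and budget `B`. -/
def E6 {n : ℕ} (u : Fin n → ℕ) (t B : ℕ) : PB (Fin n ⊕ Unit) Unit where
  A := fun _ => {Sum.inr ()}
  budget := B
  cost := cost6 u t

/-- The number of sets of exactly `k` approval flips after which `p` is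
selected by GreedyAV with cheaper-first tie-breaking, for budget `B`. -/
noncomputable def bribeCount {n : ℕ} (u : Fin n → ℕ) (t B k : ℕ)
    (prec0 : (Fin n ⊕ Unit) → (Fin n ⊕ Unit) → Bool) : ℕ :=
  (Finset.univ.filter fun F : Finset (Unit × (Fin n ⊕ Unit)) =>
    F.card = k ∧ (Sum.inr () : Fin n ⊕ Unit) ∈
      PB.greedyAV ((E6 u t B).flip F) (PB.cheaperFirst (cost6 u t) prec0)).card

/-!
Scores are 0/1: after the flips `F`, a project `x_i` is approved iff it was flipped, and `p` iff
it was not. Every `x_i` costs at most `T < 2T - t = cost p`, so with cheaper-first tie-breaking the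
projects considered before `p` are all `x_i` when `p` was flipped, and exactly the flipped `x_i`
otherwise. Their total cost is at most `T ≤ B`, so GreedyAV takes all of them and then takes `p`
iff it still fits. A flipped `p` never fits (`T + 2T - t > B`), so the bribery succeeds iff `p` is
not flipped and the flipped `x_i` form a set `S` with `∑ S + 2T - t ≤ B`. Such `F` correspond to
such `S` of the same size; for `B = 2T - 1` the condition reads `∑ S ≤ t - 1`, for `B = 2T` it
reads `∑ S ≤ t`.
-/

theorem isStrictTotalOrder_lexOn {α β : Type*} (s : β → β → Prop) [IsStrictTotalOrder β s]
    (f : α → β) (r : α → α → Prop) [IsStrictTotalOrder α r] :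
    IsStrictTotalOrder α fun a b => s (f a) (f b) ∨ (f a = f b ∧ r a b) where
  trichotomous a b hab hba := by
    obtain h | h | h := trichotomous_of s (f a) (f b)
    · exact absurd (Or.inl h) hab
    · exact Std.Trichotomous.trichotomous a b (fun h' => hab (Or.inr ⟨h, h'⟩))
        (fun h' => hba (Or.inr ⟨h.symm, h'⟩))
    · exact absurd (Or.inl h) hba
  irrefl a := by rintro (h | ⟨-, h⟩) <;> exact irrefl _ h
  trans a b c := by
    rintro (hab | ⟨hab, hab'⟩) (hbc | ⟨hbc, hbc'⟩)
    · exact Or.inl (_root_.trans hab hbc)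
    · exact Or.inl (hbc ▸ hab)
    · exact Or.inl (hab ▸ hbc)
    · exact Or.inr ⟨hab.trans hbc, _root_.trans hab' hbc'⟩

theorem List.Pairwise.mem_append_cons_left_iff {α : Type*} {r : α → α → Prop} [Std.Asymm r]
    {l₁ l₂ : List α} {p x : α} (h : (l₁ ++ p :: l₂).Pairwise r) (hx : x ∈ l₁ ++ p :: l₂) :
    x ∈ l₁ ↔ r x p := by
  obtain ⟨-, hpl₂, hl₁⟩ := List.pairwise_append.1 h
  refine ⟨fun hx₁ => hl₁ x hx₁ p List.mem_cons_self, fun hxp => ?_⟩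
  rcases List.mem_append.1 hx with hx₁ | hx₂
  · exact hx₁
  · rcases List.mem_cons.1 hx₂ with rfl | hx₂
    · exact absurd hxp (irrefl _)
    · exact absurd hxp (asymm (List.rel_of_pairwise_cons hpl₂ hx₂))

theorem Finset.card_filter_and_le_eq_add {α : Type*} (s : Finset α) (P : α → Prop)
    [DecidablePred P] (f : α → ℕ) {t : ℕ} (ht : 0 < t) :
    (s.filter fun a => P a ∧ f a ≤ t).card =
      (s.filter fun a => P a ∧ f a ≤ t - 1).card + (s.filter fun a => P a ∧ f a = t).card := by
  classical
  rw [← Finset.card_union_of_disjoint (Finset.disjoint_filter.2 fun a _ h h' => by omega)]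
  rw [← Finset.filter_or]
  congr 1
  exact Finset.filter_congr fun a _ => by
    rw [← and_or_left]
    exact and_congr_right fun _ => by omega

namespace PB

section Greedy

def greedyStep {C : Type} [DecidableEq C] (B : ℕ) (cost : C → ℕ) (W : Finset C) (c : C) :
    Finset C :=
  if (∑ x ∈ W, cost x) + cost c ≤ B then insert c W else W

variable {C : Type} [DecidableEq C] {B : ℕ} {cost : C → ℕ}

theorem greedyFold_eq_foldl (L : List C) :
    greedyFold B cost L = L.foldl (greedyStep B cost) ∅ := rfl

theorem subset_foldl_greedyStep (L : List C) (W : Finset C) :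
    W ⊆ L.foldl (greedyStep B cost) W := by
  induction L generalizing W with
  | nil => exact subset_rfl
  | cons c L ih =>
    refine subset_trans ?_ (ih _)
    unfold greedyStep
    split_ifs
    exacts [Finset.subset_insert c W, subset_rfl]

theorem foldl_greedyStep_subset (L : List C) (W : Finset C) :
    L.foldl (greedyStep B cost) W ⊆ W ∪ L.toFinset := by
  induction L generalizing W with
  | nil => simp
  | cons c L ih =>
    refine (ih _).trans (Finset.union_subset ?_ ?_)
    · unfold greedyStep
      split_ifs
      · exact Finset.insert_subset (by simp) (by intro x; simp +contextual)
      · exact Finset.subset_union_left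
    · intro x; simp +contextual

theorem foldl_greedyStep_of_sum_le (L : List C) (W : Finset C)
    (h : ∑ x ∈ W ∪ L.toFinset, cost x ≤ B) :
    L.foldl (greedyStep B cost) W = W ∪ L.toFinset := by
  induction L generalizing W with
  | nil => simp
  | cons c L ih =>
    have hstep : greedyStep B cost W c = insert c W := by
      by_cases hcW : c ∈ W
      · unfold greedyStep; split_ifs <;> simp [hcW]
      · refine if_pos (le_trans ?_ h)
        rw [add_comm, ← Finset.sum_insert hcW]
        exact Finset.sum_le_sum_of_subset (Finset.insert_subset (by simp) Finset.subset_union_left)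
    rw [List.foldl_cons, hstep, ih]
    · ext x; simp
    · convert h using 2; ext x; simp

theorem mem_greedyFold_append_cons_iff {L₁ L₂ : List C} {p : C} (hp₁ : p ∉ L₁) (hp₂ : p ∉ L₂)
    (hB : ∑ x ∈ L₁.toFinset, cost x ≤ B) :
    p ∈ greedyFold B cost (L₁ ++ p :: L₂) ↔ ∑ x ∈ L₁.toFinset, cost x + cost p ≤ B := by
  rw [greedyFold_eq_foldl, List.foldl_append, foldl_greedyStep_of_sum_le L₁ ∅ (by simpa using hB),
    Finset.empty_union, List.foldl_cons]
  unfold greedyStep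
  split_ifs with h
  · exact iff_of_true (subset_foldl_greedyStep L₂ _ (Finset.mem_insert_self p _)) h
  · refine iff_of_false (fun hp => ?_) h
    simpa [hp₁, hp₂] using foldl_greedyStep_subset L₂ _ hp

end Greedy

variable {C V : Type} [Fintype C] [DecidableEq C] [Fintype V] [DecidableEq V]

def Precedes (E : PB C V) (prec : C → C → Bool) (c c' : C) : Prop :=
  E.score c' < E.score c ∨ (E.score c = E.score c' ∧ prec c c' = true)

instance (E : PB C V) (prec : C → C → Bool) : DecidableRel (E.Precedes prec) :=
  fun _ _ => by unfold Precedes; infer_instance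

instance isStrictTotalOrder_precedes (E : PB C V) (prec : C → C → Bool)
    [IsStrictTotalOrder C fun a b => prec a b = true] :
    IsStrictTotalOrder C (E.Precedes prec) :=
  isStrictTotalOrder_lexOn (fun a b => b < a) E.score fun a b => prec a b = true

theorem pairwise_consOrderAV (E : PB C V) (prec : C → C → Bool)
    [IsStrictTotalOrder C fun a b => prec a b = true] :
    (E.consOrderAV prec).Pairwise (E.Precedes prec) := by
  set le : C → C → Bool := fun c c' => decide (E.score c' < E.score c) ||
      (decide (E.score c = E.score c') && (prec c c' || decide (c = c')))
  have hle : ∀ c c', le c c' = true ↔ E.Precedes prec c c' ∨ c = c' := by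
    intro c c'
    simp only [le, Precedes, Bool.or_eq_true, Bool.and_eq_true, decide_eq_true_eq]
    constructor
    · rintro (h | ⟨h, h' | rfl⟩) <;> tauto
    · rintro ((h | h) | rfl) <;> simp_all
  have hsorted : (E.consOrderAV prec).Pairwise fun c c' => le c c' = true :=
    List.pairwise_mergeSort
      (fun a b c hab hbc => by
        rw [hle] at *
        rcases hab with hab | rfl
        · rcases hbc with hbc | rfl
          exacts [Or.inl (_root_.trans hab hbc), Or.inl hab]
        · exact hbc)
      (fun a b => by
        rw [Bool.or_eq_true, hle, hle]
        rcases trichotomous_of (E.Precedes prec) a b with h | h | h <;> tauto) _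
  have hnodup : (E.consOrderAV prec).Nodup :=
    (List.mergeSort_perm _ _).nodup_iff.2 (Finset.nodup_toList _)
  exact (hsorted.and hnodup).imp fun ⟨h, hne⟩ => ((hle _ _).1 h).resolve_right hne

theorem mem_greedyAV_iff (E : PB C V) (prec : C → C → Bool)
    [IsStrictTotalOrder C fun a b => prec a b = true] (p : C)
    (h : ∑ c ∈ Finset.univ.filter (E.Precedes prec · p), E.cost c ≤ E.budget) :
    p ∈ E.greedyAV prec ↔
      ∑ c ∈ Finset.univ.filter (E.Precedes prec · p), E.cost c + E.cost p ≤ E.budget := by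
  have hmem : ∀ c, c ∈ E.consOrderAV prec := fun c =>
    (List.mergeSort_perm _ _).mem_iff.2 (Finset.mem_toList.2 (Finset.mem_univ c))
  obtain ⟨L₁, L₂, hL⟩ := List.append_of_mem (hmem p)
  have hsorted := E.pairwise_consOrderAV prec
  rw [hL] at hsorted hmem
  have hL₁ : L₁.toFinset = Finset.univ.filter (E.Precedes prec · p) := by
    ext c
    simp [hsorted.mem_append_cons_left_iff (hmem c)]
  have hp₂ : p ∉ L₂ := fun hp =>
    irrefl p (List.rel_of_pairwise_cons (List.pairwise_append.1 hsorted).2.1 hp)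
  have hp₁ : p ∉ L₁ := by
    rw [hsorted.mem_append_cons_left_iff (hmem p)]
    exact irrefl p
  rw [← hL₁] at h ⊢
  rw [greedyAV, hL]
  exact mem_greedyFold_append_cons_iff hp₁ hp₂ h

instance isStrictTotalOrder_cheaperFirst (cost : C → ℕ) (prec0 : C → C → Bool)
    [IsStrictTotalOrder C fun a b => prec0 a b = true] :
    IsStrictTotalOrder C fun a b => cheaperFirst cost prec0 a b = true := by
  have h : (fun a b => cheaperFirst cost prec0 a b = true) =
      fun a b => cost a < cost b ∨ (cost a = cost b ∧ prec0 a b = true) := by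
    ext a b
    simp [cheaperFirst]
  rw [h]
  exact isStrictTotalOrder_lexOn (· < ·) cost _

theorem mem_flip_A_iff (E : PB C V) (F : Finset (V × C)) (v : V) (c : C) :
    c ∈ (E.flip F).A v ↔ (c ∈ E.A v ↔ (v, c) ∉ F) := by
  have hF : c ∈ (F.filter fun q => q.1 = v).image Prod.snd ↔ (v, c) ∈ F := by simp
  rw [flip, Finset.mem_symmDiff, hF]
  tauto

theorem score_eq_ite [Unique V] (E : PB C V) (c : C) :
    E.score c = if c ∈ E.A default then 1 else 0 := by
  rw [score, Finset.univ_unique, Finset.filter_singleton]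
  split_ifs <;> rfl

end PB

section Reduction

variable {n : ℕ} (u : Fin n → ℕ) (t B : ℕ)

theorem score_E6_flip_inr (F : Finset (Unit × (Fin n ⊕ Unit))) :
    ((E6 u t B).flip F).score (.inr ()) = if ((), .inr ()) ∈ F then 0 else 1 := by
  simp only [PB.score_eq_ite, PB.mem_flip_A_iff]
  by_cases h : ((), (Sum.inr () : Fin n ⊕ Unit)) ∈ F <;> simp [h, E6]

theorem score_E6_flip_inl (F : Finset (Unit × (Fin n ⊕ Unit))) (i : Fin n) :
    ((E6 u t B).flip F).score (.inl i) = if ((), .inl i) ∈ F then 1 else 0 := by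
  simp only [PB.score_eq_ite, PB.mem_flip_A_iff]
  by_cases h : ((), (Sum.inl i : Fin n ⊕ Unit)) ∈ F <;> simp [h, E6]

/-- Every `x_i` is cheaper than `p`, so under cheaper-first tie-breaking `x_i` comes before `p`
unless `p` has strictly higher score, i.e. unless `p` is approved and `x_i` is not. -/
theorem filter_precedes_inr_E6_flip (htT : t < ∑ i, u i)
    (prec0 : (Fin n ⊕ Unit) → (Fin n ⊕ Unit) → Bool)
    [IsStrictTotalOrder (Fin n ⊕ Unit) fun a b => prec0 a b = true]
    (F : Finset (Unit × (Fin n ⊕ Unit))) :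
    Finset.univ.filter
        (((E6 u t B).flip F).Precedes (PB.cheaperFirst (cost6 u t) prec0) · (.inr ())) =
      (Finset.univ.filter fun i => ((), .inr ()) ∈ F ∨ ((), .inl i) ∈ F).map
        Function.Embedding.inl := by
  ext c
  rcases c with i | ⟨⟩
  · have hcheaper : u i < 2 * (∑ j, u j) - t := by
      have := Finset.single_le_sum (fun j _ => Nat.zero_le (u j)) (Finset.mem_univ i)
      omega
    simp only [Finset.mem_filter, Finset.mem_univ, true_and, Finset.mem_map,
      Function.Embedding.inl_apply, Sum.inl.injEq, exists_eq_right, PB.Precedes,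
      score_E6_flip_inr, score_E6_flip_inl, PB.cheaperFirst, cost6, hcheaper]
    split_ifs <;> simp_all
  · simp [irrefl]

theorem inr_mem_greedyAV_E6_flip_iff (htT : t < ∑ i, u i) (hTB : ∑ i, u i ≤ B)
    (hB : B + t < 3 * ∑ i, u i) (prec0 : (Fin n ⊕ Unit) → (Fin n ⊕ Unit) → Bool)
    [IsStrictTotalOrder (Fin n ⊕ Unit) fun a b => prec0 a b = true]
    (F : Finset (Unit × (Fin n ⊕ Unit))) :
    .inr () ∈ ((E6 u t B).flip F).greedyAV (PB.cheaperFirst (cost6 u t) prec0) ↔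
      ((), .inr ()) ∉ F ∧
        ∑ i ∈ Finset.univ.filter (fun i => ((), .inl i) ∈ F), u i + (2 * ∑ i, u i - t) ≤ B := by
  have hprefix := filter_precedes_inr_E6_flip u t B htT prec0 F
  have hcost : ∀ s : Finset (Fin n),
      ∑ c ∈ s.map Function.Embedding.inl, ((E6 u t B).flip F).cost c = ∑ i ∈ s, u i :=
    fun s => Finset.sum_map _ _ _
  rw [PB.mem_greedyAV_iff _ _ _ (by
    rw [hprefix, hcost]
    exact (Finset.sum_le_sum_of_subset (Finset.subset_univ _)).trans hTB), hprefix, hcost]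
  simp only [PB.flip, E6, cost6]
  by_cases hp : ((), (Sum.inr () : Fin n ⊕ Unit)) ∈ F
  · simp only [hp, true_or, Finset.filter_true, not_true_eq_false, false_and, iff_false]
    omega
  · simp [hp]

theorem bribeCount_eq_card_filter (htT : t < ∑ i, u i) (hTB : ∑ i, u i ≤ B)
    (hB : B + t < 3 * ∑ i, u i) (k : ℕ) (prec0 : (Fin n ⊕ Unit) → (Fin n ⊕ Unit) → Bool)
    [IsStrictTotalOrder (Fin n ⊕ Unit) fun a b => prec0 a b = true] :
    bribeCount u t B k prec0 = (Finset.univ.filter fun S : Finset (Fin n) =>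
      S.card = k ∧ ∑ i ∈ S, u i + (2 * ∑ i, u i - t) ≤ B).card := by
  let e : Fin n ↪ Unit × (Fin n ⊕ Unit) := ⟨fun i => ((), .inl i), fun i j h => by simpa using h⟩
  have he : ∀ i, e i = ((), .inl i) := fun _ => rfl
  have hpreimage_map : ∀ S : Finset (Fin n),
      Finset.univ.filter (fun i => ((), .inl i) ∈ S.map e) = S := by
    intro S; ext i; simp [he]
  have hmap_preimage : ∀ F : Finset (Unit × (Fin n ⊕ Unit)), ((), .inr ()) ∉ F →
      (Finset.univ.filter fun i => ((), .inl i) ∈ F).map e = F := by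
    intro F hF; ext ⟨⟨⟩, i | ⟨⟩⟩ <;> simp [he, hF]
  rw [bribeCount]
  refine Finset.card_nbij' (fun F => Finset.univ.filter fun i => ((), .inl i) ∈ F) (·.map e)
    ?_ ?_ ?_ ?_
  · intro F hF
    simp only [Finset.coe_filter, Set.mem_ofPred_eq, Finset.mem_univ, true_and,
      inr_mem_greedyAV_E6_flip_iff u t B htT hTB hB] at hF ⊢
    exact ⟨by rw [← Finset.card_map e, hmap_preimage F hF.2.1, hF.1], hF.2.2⟩
  · intro S hS
    simp only [Finset.coe_filter, Set.mem_ofPred_eq, Finset.mem_univ, true_and,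
      inr_mem_greedyAV_E6_flip_iff u t B htT hTB hB, hpreimage_map] at hS ⊢
    exact ⟨by rw [Finset.card_map, hS.1], by simp [he], hS.2⟩
  · intro F hF
    simp only [Finset.coe_filter, Set.mem_ofPred_eq, Finset.mem_univ, true_and,
      inr_mem_greedyAV_E6_flip_iff u t B htT hTB hB] at hF
    exact hmap_preimage F hF.2.1
  · intro S _
    exact hpreimage_map S

end Reduction

theorem stmt6_general (n k t : ℕ) (u : Fin n → ℕ)
    (ht : 0 < t) (htT : t < ∑ i, u i)
    (prec0 : (Fin n ⊕ Unit) → (Fin n ⊕ Unit) → Bool)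
    (hlin : IsStrictTotalOrder (Fin n ⊕ Unit) fun a b => prec0 a b = true) :
    bribeCount u t (2 * (∑ i, u i) - 1) k prec0 =
        (Finset.univ.filter fun S : Finset (Fin n) =>
          S.card = k ∧ ∑ i ∈ S, u i ≤ t - 1).card ∧
      bribeCount u t (2 * ∑ i, u i) k prec0 -
          bribeCount u t (2 * (∑ i, u i) - 1) k prec0 =
        (Finset.univ.filter fun S : Finset (Fin n) =>
          S.card = k ∧ ∑ i ∈ S, u i = t).card := by
  have hlow : bribeCount u t (2 * (∑ i, u i) - 1) k prec0 =
      (Finset.univ.filter fun S : Finset (Fin n) => S.card = k ∧ ∑ i ∈ S, u i ≤ t - 1).card := by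
    rw [bribeCount_eq_card_filter u t _ htT (by omega) (by omega)]
    congr 1
    exact Finset.filter_congr fun S _ => and_congr_right fun _ => by omega
  have hhigh : bribeCount u t (2 * ∑ i, u i) k prec0 =
      (Finset.univ.filter fun S : Finset (Fin n) => S.card = k ∧ ∑ i ∈ S, u i ≤ t).card := by
    rw [bribeCount_eq_card_filter u t _ htT (by omega) (by omega)]
    congr 1
    exact Finset.filter_congr fun S _ => and_congr_right fun _ => by omega
  refine ⟨hlow, ?_⟩
  rw [hhigh, hlow, Finset.card_filter_and_le_eq_add _ _ _ ht, Nat.add_sub_cancel_left]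

theorem stmt6 (n k t : ℕ) (u : Fin n → ℕ) (hu : ∀ i, 0 < u i)
    (ht : 0 < t) (htT : t < ∑ i, u i)
    (prec0 : (Fin n ⊕ Unit) → (Fin n ⊕ Unit) → Bool)
    (hlin : IsStrictTotalOrder (Fin n ⊕ Unit) fun a b => prec0 a b = true) :
    bribeCount u t (2 * (∑ i, u i) - 1) k prec0 =
        (Finset.univ.filter fun S : Finset (Fin n) =>
          S.card = k ∧ ∑ i ∈ S, u i ≤ t - 1).card ∧
      bribeCount u t (2 * ∑ i, u i) k prec0 -
          bribeCount u t (2 * (∑ i, u i) - 1) k prec0 =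
        (Finset.univ.filter fun S : Finset (Fin n) =>
          S.card = k ∧ ∑ i ∈ S, u i = t).card :=
  stmt6_general n k t u ht htT prec0 hlin
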